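/- arXiv:1907.13254 — 2 statements merged into one kernel-verified Lean document; each statement's English description precedes it below -/
import Mathlib

section
/- For n = 3, let h = (∏_{i=1}^3 (x_{3i}−x_{21}+1)(x_{3i}−x_{22}+1)) · (x_{11}−x_{21})(x_{11}−x_{22}) / ((x_{22}−x_{21}+1)(x_{21}−x_{22}+1)(x_{22}−x_{21})(x_{21}−x_{22})) ∈ L. Then A_{21}⁺ ∘ A_{21}⁻ ∘ A_{22}⁺ ∘ A_{22}⁻ = m_h; the rational function h is fixed by every ℂ-algebra automorphism of L that fixes x_{11}, permutes {x_{21}, x_{22}}, and permutes {x_{31}, x_{32}, x_{33}}; and h ∉ Λ. In particular the 𝕊_3-invariant part of 𝒜(gl_3) contains multiplication by a non-polynomial 𝕊_3-invariant rational function. -/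
open scoped BigOperators
open MvPolynomial

noncomputable section

/-- The polynomial ring `Λ = ℂ[x_{ki}]` (variables indexed by pairs `(k, i)`). -/
abbrev Lam : Type := MvPolynomial (ℕ × ℕ) ℂ

/-- `L`, the field of fractions of `Λ`. -/
abbrev L : Type := FractionRing Lam

/-- The variable `x_{ki}` as an element of `L`. -/
def x (k i : ℕ) : L := algebraMap Lam L (X (k, i))

/-- The algebra automorphism of `Λ` sending `x_v ↦ x_v - 1` and fixing the other variables. -/
def shiftEquiv (v : ℕ × ℕ) : Lam ≃ₐ[ℂ] Lam :=
  AlgEquiv.ofAlgHom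
    (aeval (fun w => if w = v then X w - 1 else X w))
    (aeval (fun w => if w = v then X w + 1 else X w))
    (by apply MvPolynomial.algHom_ext; intro w; by_cases h : w = v <;> simp [h])
    (by apply MvPolynomial.algHom_ext; intro w; by_cases h : w = v <;> simp [h])

/-- The automorphism `δ^{ki}` of `L`, determined by `δ^{ki}(x_{ℓj}) = x_{ℓj} - δ_{ℓk}δ_{ij}`. -/
def δ (k i : ℕ) : L ≃ₐ[ℂ] L := IsFractionRing.algEquivOfAlgEquiv (shiftEquiv (k, i))

/-- Multiplication by `a ∈ L` as a `ℂ`-linear endomorphism `m_a` of `L`. -/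
def mulOp (a : L) : Module.End ℂ L := LinearMap.mulLeft ℂ a

/-- A field automorphism of `L` as a `ℂ`-linear endomorphism of `L`. -/
def lin (e : L ≃ₐ[ℂ] L) : Module.End ℂ L := e.toLinearMap

/-- The rational function `a_{ki}^+`. -/
def aP (k i : ℕ) : L :=
  -((∏ j ∈ Finset.Icc 1 (k + 1), (x (k + 1) j - x k i)) /
    ∏ j ∈ (Finset.Icc 1 k).erase i, (x k j - x k i))

/-- The rational function `a_{ki}^-`. -/
def aM (k i : ℕ) : L :=
  (∏ j ∈ Finset.Icc 1 (k - 1), (x (k - 1) j - x k i)) /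
    ∏ j ∈ (Finset.Icc 1 k).erase i, (x k j - x k i)

/-- The operator `A_{ki}^+ = δ^{ki} ∘ m_{a_{ki}^+}`. -/
def Ap (k i : ℕ) : Module.End ℂ L := lin (δ k i) * mulOp (aP k i)

/-- The operator `A_{ki}^- = (δ^{ki})^{-1} ∘ m_{a_{ki}^-}`. -/
def Am (k i : ℕ) : Module.End ℂ L := lin (δ k i).symm * mulOp (aM k i)

/-- The operator `X_k^+ = ∑_{i=1}^k A_{ki}^+`. -/
def Xp (k : ℕ) : Module.End ℂ L := ∑ i ∈ Finset.Icc 1 k, Ap k i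

/-- The operator `X_k^- = ∑_{i=1}^k A_{ki}^-`. -/
def Xm (k : ℕ) : Module.End ℂ L := ∑ i ∈ Finset.Icc 1 k, Am k i

/-- The operator `X_{kk}`. -/
def Xd (k : ℕ) : Module.End ℂ L :=
  mulOp ((∑ j ∈ Finset.Icc 1 k, (x k j + (j : L) - 1)) -
    ∑ i ∈ Finset.Icc 1 (k - 1), (x (k - 1) i + (i : L) - 1))

/-- The Vandermonde polynomial `∏_{1 ≤ i < j ≤ k} (x_{ki} - x_{kj})`, as an element of `L`. -/
def vand (k : ℕ) : L :=
  ∏ p ∈ (Finset.Icc 1 k ×ˢ Finset.Icc 1 k).filter (fun p => p.1 < p.2),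
    (x k p.1 - x k p.2)

/-- The operator `𝒱_k = m_{∏_{i<j}(x_{ki} - x_{kj})}`. -/
def Vop (k : ℕ) : Module.End ℂ L := mulOp (vand k)

/-- The generating set of `U_n`: the `X_k^±` for `1 ≤ k ≤ n-1` and the `X_{kk}` for `1 ≤ k ≤ n`. -/
def Ugens (n : ℕ) : Set (Module.End ℂ L) :=
  {u | ∃ k, 1 ≤ k ∧ k + 1 ≤ n ∧ (u = Xp k ∨ u = Xm k)} ∪
    {u | ∃ k, 1 ≤ k ∧ k ≤ n ∧ u = Xd k}

/-- `U_n`, the Gelfand–Tsetlin realization of `U(gl_n)` inside `End_ℂ(L)`. -/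
def Ualg (n : ℕ) : Subalgebra ℂ (Module.End ℂ L) := Algebra.adjoin ℂ (Ugens n)

/-- `𝒜(gl_n)`, the subalgebra generated by `U_n` together with `𝒱_2, …, 𝒱_n`. -/
def Agl (n : ℕ) : Subalgebra ℂ (Module.End ℂ L) :=
  Algebra.adjoin ℂ (Ugens n ∪ {u | ∃ k, 2 ≤ k ∧ k ≤ n ∧ u = Vop k})

/-- The `𝕊_3`-invariant non-polynomial rational function `h`. -/
def hRat : L :=
  ((∏ i ∈ Finset.Icc 1 3, ((x 3 i - x 2 1 + 1) * (x 3 i - x 2 2 + 1))) *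
      ((x 1 1 - x 2 1) * (x 1 1 - x 2 2))) /
    ((x 2 2 - x 2 1 + 1) * (x 2 1 - x 2 2 + 1) * (x 2 2 - x 2 1) * (x 2 1 - x 2 2))

/-!
Since `δ^{ki}` moves only `x_{ki}`, `A_{ki}^+ ∘ A_{ki}^- = m_{δ^{ki}(a_{ki}^+) a_{ki}^-}`, so the
composite is multiplication by a product of four fractions, which multiplies out to `h`.
The function `h` is symmetric in `x_{21}, x_{22}`, and its dependence on the third row is a
product over the set `{x_{31}, x_{32}, x_{33}}`, which an automorphism permuting that set only
reindexes. Finally `h = N / D` with polynomials `N, D`, and `p D = N` is impossible for a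
polynomial `p`: `D` vanishes on `x_{21} = x_{22}`, while `N` does not.
-/

lemma δ_apply_x (k i l j : ℕ) :
    δ k i (x l j) = if (l, j) = (k, i) then x l j - 1 else x l j := by
  rw [δ, x, IsFractionRing.algEquivOfAlgEquiv_algebraMap]
  change algebraMap Lam L (aeval (fun w => if w = (k, i) then X w - 1 else X w) (X (l, j))) = _
  split_ifs <;> simp [*]

lemma x_injective (k : ℕ) : Function.Injective (x k) := fun _ _ h =>
  (Prod.mk.inj (X_injective (IsFractionRing.injective Lam L h))).2

lemma lin_mul_mulOp (e : L ≃ₐ[ℂ] L) (a : L) : lin e * mulOp a = mulOp (e a) * lin e := by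
  ext f
  simp [lin, mulOp]

lemma lin_mul_lin_symm (e : L ≃ₐ[ℂ] L) : lin e * lin e.symm = 1 := by
  ext f
  simp [lin]

lemma mulOp_mul (a b : L) : mulOp (a * b) = mulOp a * mulOp b :=
  LinearMap.mulLeft_mul ℂ L a b

lemma Ap_mul_Am (k i : ℕ) : Ap k i * Am k i = mulOp (δ k i (aP k i) * aM k i) := by
  rw [Ap, Am, lin_mul_mulOp, mul_assoc, ← mul_assoc (lin _), lin_mul_lin_symm, one_mul,
    mulOp_mul]

lemma δ_aP (k i : ℕ) :
    δ k i (aP k i) = -((∏ j ∈ Finset.Icc 1 (k + 1), (x (k + 1) j - x k i + 1)) /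
      ∏ j ∈ (Finset.Icc 1 k).erase i, (x k j - x k i + 1)) := by
  simp only [aP, map_neg, map_div₀, map_prod, map_sub, δ_apply_x, Prod.mk.injEq]
  congr 2
  · refine Finset.prod_congr rfl fun j _ => ?_
    simp [sub_add]
  · refine Finset.prod_congr rfl fun j hj => ?_
    simp [Finset.ne_of_mem_erase hj, sub_add]

lemma δ_aP_mul_aM_two_eq_hRat :
    δ 2 1 (aP 2 1) * aM 2 1 * (δ 2 2 (aP 2 2) * aM 2 2) = hRat := by
  have erase_one : (Finset.Icc 1 2).erase 1 = {2} := by decide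
  have erase_two : (Finset.Icc 1 2).erase 2 = {1} := by decide
  have Icc_one : Finset.Icc 1 (2 - 1) = {1} := rfl
  simp only [δ_aP, aM, hRat, erase_one, erase_two, Icc_one, Finset.prod_singleton,
    Finset.prod_mul_distrib, div_eq_mul_inv, mul_inv]
  -- nothing cancels, so once `⁻¹` is distributed over products this is a ring identity
  ring

open Classical in
def row (k : ℕ) : Finset L := (Finset.Icc 1 k).image (x k)

lemma prod_row (k : ℕ) (f : L → L) : ∏ s ∈ row k, f s = ∏ i ∈ Finset.Icc 1 k, f (x k i) :=
  Finset.prod_image (x_injective k).injOn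

lemma coe_row_three : (row 3 : Set L) = {x 3 1, x 3 2, x 3 3} := by
  have : Finset.Icc 1 3 = {1, 2, 3} := by decide
  simp [row, this]

def hRatAt (a b : L) : L :=
  (∏ s ∈ row 3, ((s - a + 1) * (s - b + 1))) * ((x 1 1 - a) * (x 1 1 - b)) /
    ((b - a + 1) * (a - b + 1) * (b - a) * (a - b))

lemma hRat_eq_hRatAt : hRat = hRatAt (x 2 1) (x 2 2) := by
  rw [hRatAt, prod_row]
  rfl

lemma hRatAt_comm (a b : L) : hRatAt a b = hRatAt b a := by
  simp only [hRatAt, mul_comm (_ - a + 1)]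
  ring

lemma map_hRatAt (τ : L ≃ₐ[ℂ] L) (h11 : τ (x 1 1) = x 1 1)
    (hrow : (τ : L → L) '' row 3 = row 3) (a b : L) :
    τ (hRatAt a b) = hRatAt (τ a) (τ b) := by
  have hbij : Set.BijOn τ (row 3) (row 3) := by
    simpa only [hrow] using τ.injective.injOn.bijOn_image (s := row 3)
  simp only [hRatAt, map_div₀, map_mul, map_prod, map_sub, map_add, map_one, h11]
  congr 2
  exact Finset.prod_nbij τ (fun _ hs => hbij.mapsTo hs) hbij.injOn hbij.surjOn fun _ _ => rfl

lemma algebraMap_div_notMem_range_of_map_eq_zero {R K S : Type*} [CommRing R] [Field K]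
    [Algebra R K] [IsFractionRing R K] [Semiring S] (φ : R →+* S) {N D : R} (hD : D ≠ 0)
    (hφD : φ D = 0) (hφN : φ N ≠ 0) :
    algebraMap R K N / algebraMap R K D ∉ Set.range (algebraMap R K) := by
  rintro ⟨p, hp⟩
  have hD' : algebraMap R K D ≠ 0 := (map_ne_zero_iff _ (IsFractionRing.injective R K)).mpr hD
  have hpD : p * D = N := IsFractionRing.injective R K <| by
    rw [map_mul, hp, div_mul_cancel₀ _ hD']
  exact hφN <| by rw [← hpD, map_mul, hφD, mul_zero]

def hNum : Lam :=
  (∏ i ∈ Finset.Icc 1 3, ((X (3, i) - X (2, 1) + 1) * (X (3, i) - X (2, 2) + 1))) *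
    ((X (1, 1) - X (2, 1)) * (X (1, 1) - X (2, 2)))

def hDen : Lam :=
  (X (2, 2) - X (2, 1) + 1) * (X (2, 1) - X (2, 2) + 1) * (X (2, 2) - X (2, 1)) *
    (X (2, 1) - X (2, 2))

lemma hRat_eq_div : hRat = algebraMap Lam L hNum / algebraMap Lam L hDen := by
  simp only [hRat, hNum, hDen, x, map_mul, map_prod, map_sub, map_add, map_one]

lemma hDen_ne_zero : hDen ≠ 0 := fun h => by
  have := congrArg (eval fun v => if v = (2, 2) then (2 : ℂ) else 0) h
  norm_num [hDen] at this

/-- `A_{21}⁺ ∘ A_{21}⁻ ∘ A_{22}⁺ ∘ A_{22}⁻ = m_h`; `h` is fixed by every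
ℂ-algebra automorphism of `L` fixing `x_{11}` and permuting `{x_{21}, x_{22}}` and
`{x_{31}, x_{32}, x_{33}}`; and `h` is not a polynomial. -/
theorem S3_invariant_nonpolynomial_element :
    Ap 2 1 * Am 2 1 * Ap 2 2 * Am 2 2 = mulOp hRat ∧
    (∀ τ : L ≃ₐ[ℂ] L, τ (x 1 1) = x 1 1 →
      (τ : L → L) '' {x 2 1, x 2 2} = {x 2 1, x 2 2} →
      (τ : L → L) '' {x 3 1, x 3 2, x 3 3} = {x 3 1, x 3 2, x 3 3} →
      τ hRat = hRat) ∧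
    hRat ∉ Set.range (algebraMap Lam L) := by
  refine ⟨?_, fun τ h11 h2 h3 => ?_, ?_⟩
  · rw [mul_assoc _ (Ap 2 2), Ap_mul_Am, Ap_mul_Am, ← mulOp_mul,
      δ_aP_mul_aM_two_eq_hRat]
  · rw [hRat_eq_hRatAt, map_hRatAt τ h11 (by rwa [coe_row_three])]
    rw [Set.image_pair, Set.pair_eq_pair_iff] at h2
    rcases h2 with ⟨h21, h22⟩ | ⟨h21, h22⟩
    · rw [h21, h22]
    · rw [h21, h22, hRatAt_comm]
  · rw [hRat_eq_div]
    exact algebraMap_div_notMem_range_of_map_eq_zero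
      (eval fun v => if v.1 = 3 ∨ v = (1, 1) then (1 : ℂ) else 0) hDen_ne_zero
      (by simp [hDen]) (by simp [hNum])
end
end

section
/- For n = 3 and for both sign choices, the identity m_{x_{21}−x_{22}±1} ∘ A_{22}^± ∘ A_{21}^± = m_{x_{21}−x_{22}∓1} ∘ A_{21}^± ∘ A_{22}^± holds in End_ℂ(L); equivalently, in any localization where x_{21}−x_{22}±1 is invertible, A_{22}^± A_{21}^± = ((x_{21}−x_{22}∓1)/(x_{21}−x_{22}±1)) · A_{21}^± A_{22}^±. -/
open scoped BigOperators
open MvPolynomial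

noncomputable section

/-!
`A₂₂A₂₁` and `A₂₁A₂₂` are both multiplication by a rational function followed by the shift
`δ²¹δ²²` (the shifts commute). In `A₂₂⁺A₂₁⁺` the coefficient contains `δ²²(a₂₂⁺)`, whose denominator
`x₂₁ - x₂₂` has become `x₂₁ - x₂₂ + 1`, while in `A₂₁⁺A₂₂⁺` the denominator `x₂₂ - x₂₁` of `a₂₁⁺`
has become `x₂₂ - x₂₁ + 1`; all other factors agree, so the two coefficients differ by the factor
`(x₂₁ - x₂₂ - 1)/(x₂₁ - x₂₂ + 1)`. The `-` case is the same with the inverse shifts.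
-/

lemma shiftEquiv_X (v w : ℕ × ℕ) :
    shiftEquiv v (X w) = X w - if w = v then 1 else 0 := by
  by_cases h : w = v <;> simp [shiftEquiv, h]

lemma shiftEquiv_commute (v w : ℕ × ℕ) : Commute (shiftEquiv v) (shiftEquiv w) := by
  refine AlgEquiv.coe_toAlgHom_injective (MvPolynomial.algHom_ext fun u => ?_)
  simp only [AlgEquiv.coe_toAlgHom, AlgEquiv.mul_apply, shiftEquiv_X, map_sub, map_one,
    apply_ite, map_zero]
  split_ifs <;> ring

lemma δ_algebraMap (k i : ℕ) (p : Lam) :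
    δ k i (algebraMap Lam L p) = algebraMap Lam L (shiftEquiv (k, i) p) :=
  IsFractionRing.algEquivOfAlgEquiv_algebraMap _ p

lemma δ_x (k i l j : ℕ) : δ k i (x l j) = x l j - if (l, j) = (k, i) then 1 else 0 := by
  rw [x, δ_algebraMap, shiftEquiv_X]
  split_ifs <;> simp

lemma δ_commute (k i l j : ℕ) : Commute (δ k i) (δ l j) := by
  ext z
  obtain ⟨p, q, -, rfl⟩ := IsFractionRing.div_surjective (A := Lam) z
  have hc (r : Lam) :
      shiftEquiv (k, i) (shiftEquiv (l, j) r) = shiftEquiv (l, j) (shiftEquiv (k, i) r) :=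
    AlgEquiv.ext_iff.mp (shiftEquiv_commute (k, i) (l, j)) r
  simp only [map_div₀, AlgEquiv.mul_apply, δ_algebraMap, hc]

lemma δ_symm_x (k i l j : ℕ) :
    (δ k i).symm (x l j) = x l j + if (l, j) = (k, i) then 1 else 0 := by
  rw [AlgEquiv.symm_apply_eq, map_add, δ_x]
  split_ifs <;> simp

lemma δ_symm_commute (k i l j : ℕ) : Commute (δ k i).symm (δ l j).symm :=
  (δ_commute k i l j).inv_inv

lemma twisted_comm_of_commute {e₁ e₂ : L ≃ₐ[ℂ] L} (he : Commute e₁ e₂) {a₁ a₂ c₁ c₂ : L}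
    (h : c₁ * (e₂ a₂ * e₂ (e₁ a₁)) = c₂ * (e₁ a₁ * e₁ (e₂ a₂))) :
    mulOp c₁ * (lin e₂ * mulOp a₂ * (lin e₁ * mulOp a₁)) =
      mulOp c₂ * (lin e₁ * mulOp a₁ * (lin e₂ * mulOp a₂)) := by
  ext f
  have hf : e₁ (e₂ f) = e₂ (e₁ f) := AlgEquiv.ext_iff.mp he.eq f
  simp only [mulOp, lin, Module.End.mul_apply, LinearMap.mulLeft_apply, AlgEquiv.toLinearMap_apply,
    map_mul, hf]
  linear_combination e₂ (e₁ f) * h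

lemma x_sub_x_add_intCast_ne_zero {k i l j : ℕ} (h : (k, i) ≠ (l, j)) (c : ℤ) :
    x k i - x l j + c ≠ 0 := by
  have hx : x k i - x l j + c = algebraMap Lam L ((X (k, i) : Lam) - X (l, j) + (c : Lam)) := by
    simp [x]
  rw [hx, Ne, IsFractionRing.to_map_eq_zero_iff]
  intro h0
  have h1 := congrArg (aeval fun v => if v = (k, i) then 1 - (c : ℂ) else 0) h0
  simp [h.symm] at h1

lemma twist_identity {K : Type*} [Field K] {a b s : K} (p q : K) (h₁ : a - b + s ≠ 0)
    (h₂ : b - a + s ≠ 0) :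
    (a - b + s) * (p / (a - b + s) * (q / (b - a))) =
      (a - b - s) * (q / (b - a + s) * (p / (a - b))) := by
  rcases eq_or_ne a b with rfl | hab
  · simp
  have hba : b - a ≠ 0 := sub_ne_zero.mpr hab.symm
  field_simp
  ring

lemma aP_two_one : aP 2 1 =
    -((x 3 1 - x 2 1) * (x 3 2 - x 2 1) * (x 3 3 - x 2 1) / (x 2 2 - x 2 1)) := by
  simp [aP, Finset.prod_Icc_succ_top]

lemma aP_two_two : aP 2 2 =
    -((x 3 1 - x 2 2) * (x 3 2 - x 2 2) * (x 3 3 - x 2 2) / (x 2 1 - x 2 2)) := by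
  simp [aP, Finset.prod_Icc_succ_top]

lemma aM_two_one : aM 2 1 = (x 1 1 - x 2 1) / (x 2 2 - x 2 1) := by
  simp [aM]

lemma aM_two_two : aM 2 2 = (x 1 1 - x 2 2) / (x 2 1 - x 2 2) := by
  simp [aM]

lemma aP_two_twist :
    (x 2 1 - x 2 2 + 1) * (δ 2 2 (aP 2 2) * δ 2 2 (δ 2 1 (aP 2 1))) =
      (x 2 1 - x 2 2 - 1) * (δ 2 1 (aP 2 1) * δ 2 1 (δ 2 2 (aP 2 2))) := by
  have h₁ : x 2 1 - x 2 2 + (1 : ℤ) ≠ 0 := x_sub_x_add_intCast_ne_zero (by decide) 1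
  have h₂ : x 2 2 - x 2 1 + (1 : ℤ) ≠ 0 := x_sub_x_add_intCast_ne_zero (by decide) 1
  simp only [aP_two_one, aP_two_two, map_neg, map_div₀, map_mul, map_sub, δ_x, Prod.mk.injEq,
    Nat.succ_ne_self, OfNat.one_ne_ofNat, OfNat.ofNat_ne_one, and_self, and_true, and_false,
    ↓reduceIte, sub_zero, map_one, sub_sub_sub_cancel_right, mul_neg, neg_mul, neg_neg]
  convert twist_identity _ _ h₁ h₂ using 4 <;> push_cast <;> ring

lemma aM_two_twist :
    (x 2 1 - x 2 2 - 1) * ((δ 2 2).symm (aM 2 2) * (δ 2 2).symm ((δ 2 1).symm (aM 2 1))) =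
      (x 2 1 - x 2 2 + 1) * ((δ 2 1).symm (aM 2 1) * (δ 2 1).symm ((δ 2 2).symm (aM 2 2))) := by
  have h₁ : x 2 1 - x 2 2 + (-1 : ℤ) ≠ 0 := x_sub_x_add_intCast_ne_zero (by decide) (-1)
  have h₂ : x 2 2 - x 2 1 + (-1 : ℤ) ≠ 0 := x_sub_x_add_intCast_ne_zero (by decide) (-1)
  simp only [aM_two_one, aM_two_two, map_div₀, map_sub, map_add, δ_symm_x, Prod.mk.injEq,
    OfNat.one_ne_ofNat, OfNat.ofNat_ne_one, and_self, and_true, and_false, ↓reduceIte, add_zero,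
    map_one, add_sub_add_right_eq_sub]
  convert twist_identity _ _ h₁ h₂ using 4 <;> push_cast <;> ring

/-- `m_{x_{21}−x_{22}±1} ∘ A_{22}^± ∘ A_{21}^± = m_{x_{21}−x_{22}∓1} ∘ A_{21}^± ∘ A_{22}^±`
for both sign choices. -/
theorem twisted_commutation_A21_A22 :
    mulOp (x 2 1 - x 2 2 + 1) * (Ap 2 2 * Ap 2 1) =
      mulOp (x 2 1 - x 2 2 - 1) * (Ap 2 1 * Ap 2 2) ∧
    mulOp (x 2 1 - x 2 2 - 1) * (Am 2 2 * Am 2 1) =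
      mulOp (x 2 1 - x 2 2 + 1) * (Am 2 1 * Am 2 2) :=
  ⟨twisted_comm_of_commute (δ_commute 2 1 2 2) aP_two_twist,
    twisted_comm_of_commute (δ_symm_commute 2 1 2 2) aM_two_twist⟩
end
end
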